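/- arXiv:1708.04868 — 4 statements merged into one kernel-verified Lean document; each statement's English description precedes it below -/
import Mathlib

section
/- Let Z be a compact topological space, let d and d' be two metrics on Z both inducing its topology, and let f : Z → Z be continuous. Then for every ε > 0 there exists μ > 0 such that S_ε((Z,d), f) ⊆ S_μ((Z,d'), f). -/
open Filter Topology

/-- `(x, y)` is a scrambled pair of `f` with respect to the distance function `d`. -/
def scrambledPair {Z : Type*} (d : Z → Z → ℝ) (f : Z → Z) (x y : Z) : Prop :=
  liminf (fun n : ℕ => d (f^[n] x) (f^[n] y)) atTop = 0 ∧
    0 < limsup (fun n : ℕ => d (f^[n] x) (f^[n] y)) atTop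

/-! Two metrics inducing the same compact topology are uniformly equivalent, so "small" and
"not small" mean the same for both: a liminf equal to `0` is preserved, and a limsup above `ε`
for one metric gives a limsup at least `δ` for the other, where `δ` is a modulus of uniform
continuity of the identity at `ε`. -/

section RealSequences

variable {α : Type*} {l : Filter α} [l.NeBot] {u v : α → ℝ}

theorem liminf_eq_zero_of_forall_exists_lt (hu : IsBoundedUnder (· ≤ ·) l u)
    (hv : IsBoundedUnder (· ≤ ·) l v) (hv0 : ∀ᶠ a in l, 0 ≤ v a)
    (huv : ∀ η > 0, ∃ δ > 0, ∀ a, u a < δ → v a < η) (h : liminf u l = 0) :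
    liminf v l = 0 := by
  refine le_antisymm (le_of_forall_pos_le_add fun η hη => ?_)
    (le_liminf_of_le hv.isCoboundedUnder_ge hv0)
  obtain ⟨δ, hδ, hδη⟩ := huv η hη
  have hu_small : ∃ᶠ a in l, u a < δ :=
    frequently_lt_of_liminf_lt hu.isCoboundedUnder_ge (h ▸ hδ)
  have hv_small : ∃ᶠ a in l, v a ≤ η := hu_small.mono fun a ha => (hδη a ha).le
  simpa using liminf_le_of_frequently_le hv_small (isBoundedUnder_of_eventually_ge hv0)

theorem le_limsup_of_lt_limsup {ε δ : ℝ} (hu : IsBoundedUnder (· ≥ ·) l u)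
    (hv : IsBoundedUnder (· ≤ ·) l v) (huv : ∀ a, ε < u a → δ ≤ v a)
    (h : ε < limsup u l) : δ ≤ limsup v l :=
  le_limsup_of_frequently_le ((frequently_lt_of_lt_limsup hu.isCoboundedUnder_le h).mono huv) hv

end RealSequences

section CompactMetrics

variable {Z : Type*} [tZ : TopologicalSpace Z] [CompactSpace Z]

theorem exists_dist_lt_of_dist_lt_of_compactSpace (m m' : PseudoMetricSpace Z)
    (hm : m.toUniformSpace.toTopologicalSpace = tZ)
    (hm' : m'.toUniformSpace.toTopologicalSpace = tZ) :
    ∀ ε > (0 : ℝ), ∃ δ > (0 : ℝ), ∀ a b : Z, m'.dist a b < δ → m.dist a b < ε := by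
  subst hm
  have hcompact : @CompactSpace Z m'.toUniformSpace.toTopologicalSpace := hm' ▸ ‹_›
  have hid : @UniformContinuous Z Z m'.toUniformSpace m.toUniformSpace id :=
    @CompactSpace.uniformContinuous_of_continuous Z Z m'.toUniformSpace m.toUniformSpace
      hcompact id (continuous_id_iff_le.2 hm'.le)
  intro ε hε
  obtain ⟨δ, hδ, hδε⟩ := (@Metric.uniformContinuous_iff Z Z m' m id).1 hid ε hε
  exact ⟨δ, hδ, fun a b => @hδε a b⟩

theorem isBoundedUnder_dist_of_compactSpace (m : PseudoMetricSpace Z)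
    (hm : m.toUniformSpace.toTopologicalSpace = tZ) {α : Type*} (l : Filter α) (a b : α → Z) :
    IsBoundedUnder (· ≤ ·) l fun i => m.dist (a i) (b i) := by
  subst hm
  obtain ⟨C, hC⟩ := Metric.isBounded_iff.1 (isCompact_univ (X := Z)).isBounded
  exact isBoundedUnder_of ⟨C, fun i => hC (Set.mem_univ _) (Set.mem_univ _)⟩

end CompactMetrics

theorem stmt1_general {Z : Type*} [tZ : TopologicalSpace Z] [CompactSpace Z]
    (m m' : MetricSpace Z)
    (hm : m.toUniformSpace.toTopologicalSpace = tZ)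
    (hm' : m'.toUniformSpace.toTopologicalSpace = tZ)
    (f : Z → Z) :
    ∀ ε > (0 : ℝ), ∃ μ > (0 : ℝ),
      {p : Z × Z | scrambledPair (@dist Z m.toDist) f p.1 p.2 ∧
          ε < limsup (fun n : ℕ => @dist Z m.toDist (f^[n] p.1) (f^[n] p.2)) atTop} ⊆
        {p : Z × Z | scrambledPair (@dist Z m'.toDist) f p.1 p.2 ∧
          μ < limsup (fun n : ℕ => @dist Z m'.toDist (f^[n] p.1) (f^[n] p.2)) atTop} := by
  intro ε hε
  obtain ⟨δ, hδ, hδε⟩ := exists_dist_lt_of_dist_lt_of_compactSpace _ _ hm hm' ε hε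
  refine ⟨δ / 2, half_pos hδ, ?_⟩
  rintro ⟨x, y⟩ ⟨⟨hliminf, -⟩, hlimsup⟩
  have hbdd := fun (m : MetricSpace Z) hm =>
    isBoundedUnder_dist_of_compactSpace m.toPseudoMetricSpace hm atTop
      (fun n => f^[n] x) (fun n => f^[n] y)
  have hlimsup' : δ ≤ limsup (fun n => @dist Z m'.toDist (f^[n] x) (f^[n] y)) atTop :=
    le_limsup_of_lt_limsup
      (isBoundedUnder_of ⟨0, fun _ => @dist_nonneg _ m.toPseudoMetricSpace _ _⟩) (hbdd m' hm')
      (fun n hn => not_lt.1 fun h => (hδε _ _ h).not_gt hn) hlimsup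
  have hliminf' := liminf_eq_zero_of_forall_exists_lt (hbdd m hm) (hbdd m' hm')
    (Eventually.of_forall fun _ => @dist_nonneg _ m'.toPseudoMetricSpace _ _)
    (fun η hη => (exists_dist_lt_of_dist_lt_of_compactSpace _ _ hm' hm η hη).imp
      fun _ => And.imp_right fun h n => h _ _) hliminf
  exact ⟨⟨hliminf', by linarith⟩, by linarith⟩

/-- If `Z` is a compact topological space, `m` and `m'` are two metrics
on `Z`, both inducing its topology, and `f : Z → Z` is continuous, then for every
`ε > 0` there exists `μ > 0` with `S_ε((Z,d), f) ⊆ S_μ((Z,d'), f)`. -/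
theorem stmt1 {Z : Type*} [tZ : TopologicalSpace Z] [CompactSpace Z]
    (m m' : MetricSpace Z)
    (hm : m.toUniformSpace.toTopologicalSpace = tZ)
    (hm' : m'.toUniformSpace.toTopologicalSpace = tZ)
    (f : Z → Z) (hf : Continuous f) :
    ∀ ε > (0 : ℝ), ∃ μ > (0 : ℝ),
      {p : Z × Z | scrambledPair (@dist Z m.toDist) f p.1 p.2 ∧
          ε < limsup (fun n : ℕ => @dist Z m.toDist (f^[n] p.1) (f^[n] p.2)) atTop} ⊆
        {p : Z × Z | scrambledPair (@dist Z m'.toDist) f p.1 p.2 ∧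
          μ < limsup (fun n : ℕ => @dist Z m'.toDist (f^[n] p.1) (f^[n] p.2)) atTop} :=
  stmt1_general (tZ := tZ) m m' hm hm' f
end

section
/- Let Γ be a nonempty set and φ : Γ → Γ a map with no periodic point. Then for all finite nonempty subsets A, B of Γ, the set {n ∈ ℤ : φ^n(A) ∩ B ≠ ∅} (where for n ≥ 0, φ^n(A) is the image of A under the n-fold iterate of φ, and for n < 0, φ^n(A) is the preimage of A under the |n|-fold iterate of φ) is finite and has at most card(A)·card(B) elements. -/
/-- The set of integers `n` such that `φ^n(A) ∩ B ≠ ∅`, where for `n ≥ 0`, `φ^n(A)` is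
the image of `A` under the `n`-fold iterate of `φ`, and for `n < 0` it is the preimage
of `A` under the `|n|`-fold iterate of `φ`. -/
def hitTimes {Γ : Type*} (φ : Γ → Γ) (A B : Set Γ) : Set ℤ :=
  {n : ℤ | (0 ≤ n ∧ ∃ a ∈ A, φ^[n.toNat] a ∈ B) ∨ (n < 0 ∧ ∃ b ∈ B, φ^[(-n).toNat] b ∈ A)}

/-!
Writing `n⁺, n⁻` for the positive and negative parts of `n`, an integer `n` is a hit time of
the pair `(a, b)` exactly when `φ^[n⁺] a = φ^[n⁻] b`. Without periodic points every orbit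
`k ↦ φ^[k] x` is injective, and two hit times `m, n` of the same pair give
`φ^[n⁻ + m⁺] a = φ^[m⁻ + n⁺] a`, hence `m = n`. So each pair in `A × B` contributes at most
one hit time.
-/

open Function

theorem Function.iterate_injective_apply_of_periodicPts_eq_empty {α : Type*} {f : α → α}
    (hf : periodicPts f = ∅) (x : α) : Injective fun n => f^[n] x := by
  intro m n hmn
  by_contra hne
  wlog hlt : m < n generalizing m n
  · exact this hmn.symm (Ne.symm hne) (by omega)
  have hper : IsPeriodicPt f (n - m) (f^[m] x) := by
    rw [IsPeriodicPt, IsFixedPt, ← iterate_add_apply, Nat.sub_add_cancel hlt.le]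
    exact hmn.symm
  exact (hf ▸ mk_mem_periodicPts (by omega) hper : f^[m] x ∈ (∅ : Set α))

theorem Set.ncard_biUnion_le_of_subsingleton {ι α : Type*} {s : Set ι} (hs : s.Finite)
    {t : ι → Set α} (ht : ∀ i ∈ s, (t i).Subsingleton) : (⋃ i ∈ s, t i).ncard ≤ s.ncard := by
  lift s to Finset ι using hs
  calc (⋃ i ∈ (s : Set ι), t i).ncard ≤ ∑ i ∈ s, (t i).ncard := s.set_ncard_biUnion_le t
    _ ≤ ∑ _i ∈ s, 1 :=
      Finset.sum_le_sum fun i hi => (Set.ncard_le_one (ht i hi).finite).2 (ht i hi)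
    _ = (s : Set ι).ncard := by simp

theorem hitTimes_eq_biUnion {Γ : Type*} (φ : Γ → Γ) (A B : Set Γ) :
    hitTimes φ A B = ⋃ p ∈ A ×ˢ B, hitTimes φ {p.1} {p.2} := by
  ext n
  simp only [hitTimes, Set.mem_ofPred_eq, Set.mem_iUnion, Set.mem_prod, Set.mem_singleton_iff,
    exists_prop, Prod.exists, exists_eq_left]
  constructor
  · rintro (⟨hn, a, ha, hb⟩ | ⟨hn, b, hb, ha⟩)
    · exact ⟨a, _, ⟨ha, hb⟩, .inl ⟨hn, rfl⟩⟩
    · exact ⟨_, b, ⟨ha, hb⟩, .inr ⟨hn, rfl⟩⟩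
  · rintro ⟨a, b, ⟨ha, hb⟩, ⟨hn, rfl⟩ | ⟨hn, rfl⟩⟩
    · exact .inl ⟨hn, a, ha, hb⟩
    · exact .inr ⟨hn, b, hb, ha⟩

theorem mem_hitTimes_singleton {Γ : Type*} {φ : Γ → Γ} {a b : Γ} {n : ℤ} :
    n ∈ hitTimes φ {a} {b} ↔ φ^[n.toNat] a = φ^[(-n).toNat] b := by
  simp only [hitTimes, Set.mem_ofPred_eq, Set.mem_singleton_iff, exists_eq_left]
  rcases le_or_gt 0 n with hn | hn
  · simp [hn, not_lt.2 hn, Int.toNat_eq_zero.2 (neg_nonpos.2 hn)]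
  · simp [hn, not_le.2 hn, Int.toNat_eq_zero.2 hn.le, eq_comm]

theorem hitTimes_singleton_subsingleton {Γ : Type*} {φ : Γ → Γ} (hφ : periodicPts φ = ∅)
    (a b : Γ) : (hitTimes φ {a} {b}).Subsingleton := by
  intro m hm n hn
  rw [mem_hitTimes_singleton] at hm hn
  have horbit : φ^[(-n).toNat + m.toNat] a = φ^[(-m).toNat + n.toNat] a :=
    calc φ^[(-n).toNat + m.toNat] a = φ^[(-n).toNat + (-m).toNat] b := by
          rw [iterate_add_apply, hm, iterate_add_apply]
      _ = φ^[(-m).toNat + (-n).toNat] b := by rw [add_comm]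
      _ = φ^[(-m).toNat + n.toNat] a := by rw [iterate_add_apply, ← hn, iterate_add_apply]
  have := iterate_injective_apply_of_periodicPts_eq_empty hφ a horbit
  omega

theorem stmt4_general {Γ : Type*} (φ : Γ → Γ)
    (hφ : ¬ ∃ a : Γ, ∃ n : ℕ, 1 ≤ n ∧ φ^[n] a = a)
    (A B : Set Γ) (hA : A.Finite) (hB : B.Finite) :
    (hitTimes φ A B).Finite ∧ (hitTimes φ A B).ncard ≤ A.ncard * B.ncard := by
  have hper : periodicPts φ = ∅ :=
    Set.eq_empty_of_forall_notMem fun a ⟨n, hn, ha⟩ => hφ ⟨a, n, hn, ha⟩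
  have hpairs : ∀ p ∈ A ×ˢ B, (hitTimes φ {p.1} {p.2}).Subsingleton := fun p _ =>
    hitTimes_singleton_subsingleton hper p.1 p.2
  rw [hitTimes_eq_biUnion, ← Set.ncard_prod]
  exact ⟨(hA.prod hB).biUnion fun p hp => (hpairs p hp).finite,
    Set.ncard_biUnion_le_of_subsingleton (hA.prod hB) hpairs⟩

/-- If `φ : Γ → Γ` has no periodic point, then for all finite nonempty
subsets `A, B` of `Γ`, the set `{n ∈ ℤ : φ^n(A) ∩ B ≠ ∅}` is finite and has at most
`card A * card B` elements. -/
theorem stmt4 {Γ : Type*} [Nonempty Γ] (φ : Γ → Γ)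
    (hφ : ¬ ∃ a : Γ, ∃ n : ℕ, 1 ≤ n ∧ φ^[n] a = a)
    (A B : Set Γ) (hA : A.Finite) (hB : B.Finite) (hA' : A.Nonempty) (hB' : B.Nonempty) :
    (hitTimes φ A B).Finite ∧ (hitTimes φ A B).ncard ≤ A.ncard * B.ncard :=
  stmt4_general φ hφ A B hA hB
end

section
/- Suppose φ : Γ → Γ has no periodic point. Let (x, y) ∈ S(X^Γ, σ_φ) be a scrambled pair, and let z, w ∈ X^Γ be such that there is a finite subset F ⊆ Γ with x_α = z_α and y_α = w_α for all α ∈ Γ \ F. Then (z, w) ∈ S(X^Γ, σ_φ) and limsup_{t→∞} D(σ_φ^t(x), σ_φ^t(y)) = limsup_{t→∞} D(σ_φ^t(z), σ_φ^t(w)). -/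
open Filter Topology

open scoped Classical in
/-- The metric `D` on `X^Γ`, via a fixed bijection `e : ℕ ≃ Γ`. -/
noncomputable def gsD {X Γ : Type*} (e : ℕ ≃ Γ) (x y : Γ → X) : ℝ :=
  ∑' n : ℕ, (if x (e n) = y (e n) then (0 : ℝ) else 1) / 2 ^ (n + 1)

/-- The generalized shift `σ_φ`. -/
def gshift {X Γ : Type*} (φ : Γ → Γ) : (Γ → X) → (Γ → X) := fun x => x ∘ φ

/-!
Without periodic points every orbit of `φ` is injective, so it meets the finite set `F`
only finitely often. Hence for each coordinate `α`, eventually `σ_φ^t x` and `σ_φ^t z`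
agree at `α`, and so do `σ_φ^t y` and `σ_φ^t w`. Since `D` only sees finitely many
coordinates up to any given precision, `D(σ_φ^t x, σ_φ^t y) - D(σ_φ^t z, σ_φ^t w) → 0`,
and bounded real sequences with vanishing difference have the same `liminf` and `limsup`.
-/

open Function

section LiminfLimsup

variable {ι : Type*} {l : Filter ι} [l.NeBot] {a b : ι → ℝ}

lemma limsup_eq_of_tendsto_sub (ha₁ : IsBoundedUnder (· ≤ ·) l a)
    (ha₂ : IsBoundedUnder (· ≥ ·) l a) (h : Tendsto (fun i => a i - b i) l (𝓝 0)) :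
    limsup b l = limsup a l := by
  have hd : Tendsto (fun i => b i - a i) l (𝓝 0) := by simpa using h.neg
  have hb : b = a + fun i => b i - a i := by ext; simp
  rw [hb]
  refine le_antisymm ?_ ?_
  · simpa [hd.limsup_eq] using limsup_add_le ha₂ ha₁ hd.isBoundedUnder_ge.isCoboundedUnder_le
      hd.isBoundedUnder_le
  · simpa [hd.liminf_eq] using le_limsup_add ha₁ ha₂.isCoboundedUnder_le hd.isBoundedUnder_le
      hd.isBoundedUnder_ge

lemma liminf_eq_of_tendsto_sub (ha₁ : IsBoundedUnder (· ≤ ·) l a)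
    (ha₂ : IsBoundedUnder (· ≥ ·) l a) (h : Tendsto (fun i => a i - b i) l (𝓝 0)) :
    liminf b l = liminf a l := by
  have hd : Tendsto (fun i => b i - a i) l (𝓝 0) := by simpa using h.neg
  have hb : b = (fun i => b i - a i) + a := by ext; simp
  rw [hb]
  refine le_antisymm ?_ ?_
  · simpa [hd.limsup_eq] using liminf_add_le hd.isBoundedUnder_ge hd.isBoundedUnder_le ha₂
      ha₁.isCoboundedUnder_ge
  · simpa [hd.liminf_eq] using le_liminf_add hd.isBoundedUnder_ge hd.isBoundedUnder_le ha₂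
      ha₁.isCoboundedUnder_ge

end LiminfLimsup

section DyadicSeries

variable {f : ℕ → ℝ}

lemma norm_div_two_pow_succ_le (hf : ∀ n, |f n| ≤ 1) (n : ℕ) :
    ‖f n / 2 ^ (n + 1)‖ ≤ 1 / 2 / 2 ^ n := by
  rw [Real.norm_eq_abs, abs_div, abs_of_pos (by positivity : (0 : ℝ) < 2 ^ (n + 1)), pow_succ,
    div_div, mul_comm]
  exact div_le_div_of_nonneg_right (hf n) (by positivity)

lemma summable_div_two_pow_succ (hf : ∀ n, |f n| ≤ 1) : Summable fun n => f n / 2 ^ (n + 1) :=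
  (hasSum_geometric_two' 1).summable.of_norm_bounded (norm_div_two_pow_succ_le hf)

lemma abs_tsum_div_two_pow_succ_le_one (hf : ∀ n, |f n| ≤ 1) :
    |∑' n, f n / 2 ^ (n + 1)| ≤ 1 :=
  tsum_of_norm_bounded (hasSum_geometric_two' 1) (norm_div_two_pow_succ_le hf)

lemma abs_tsum_div_two_pow_succ_le_of_eq_zero {N : ℕ} (hf : ∀ n, |f n| ≤ 1)
    (hN : ∀ n < N, f n = 0) : |∑' n, f n / 2 ^ (n + 1)| ≤ (1 / 2) ^ N := by
  have htail : ∑' n, f n / 2 ^ (n + 1) = (1 / 2) ^ N * ∑' n, f (n + N) / 2 ^ (n + 1) := by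
    rw [← (summable_div_two_pow_succ hf).sum_add_tsum_nat_add N,
      Finset.sum_eq_zero fun n hn => by simp [hN n (Finset.mem_range.1 hn)], zero_add,
      ← tsum_mul_left]
    congr 1 with n
    rw [show n + N + 1 = N + (n + 1) by omega, pow_add, one_div_pow]
    field_simp
  rw [htail, abs_mul, abs_of_pos (by positivity)]
  simpa using mul_le_mul_of_nonneg_left (abs_tsum_div_two_pow_succ_le_one fun n => hf (n + N))
    (by positivity : (0 : ℝ) ≤ (1 / 2) ^ N)

end DyadicSeries

section Metric

open scoped Classical

variable {X Γ : Type*} (e : ℕ ≃ Γ)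

lemma abs_ite_eq_zero_one_le_one (p : Prop) [Decidable p] :
    |(if p then (0 : ℝ) else 1)| ≤ 1 := by
  split_ifs <;> norm_num

lemma gsD_nonneg (x y : Γ → X) : 0 ≤ gsD e x y :=
  tsum_nonneg fun n => div_nonneg (by split_ifs <;> norm_num) (by positivity)

lemma gsD_le_one (x y : Γ → X) : gsD e x y ≤ 1 :=
  le_of_abs_le (abs_tsum_div_two_pow_succ_le_one fun _ => abs_ite_eq_zero_one_le_one _)

lemma abs_gsD_sub_gsD_le {x y x' y' : Γ → X} {N : ℕ}
    (h : ∀ n < N, x (e n) = x' (e n) ∧ y (e n) = y' (e n)) :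
    |gsD e x y - gsD e x' y'| ≤ (1 / 2) ^ N := by
  unfold gsD
  rw [← (summable_div_two_pow_succ fun _ => abs_ite_eq_zero_one_le_one _).tsum_sub
    (summable_div_two_pow_succ fun _ => abs_ite_eq_zero_one_le_one _)]
  simp_rw [← sub_div]
  refine abs_tsum_div_two_pow_succ_le_of_eq_zero (fun _ => ?_) fun n hn => ?_
  · split_ifs <;> norm_num
  · simp [(h n hn).1, (h n hn).2]

lemma tendsto_gsD_sub_gsD {ι : Type*} {l : Filter ι} {u v u' v' : ι → Γ → X}
    (hu : ∀ α, ∀ᶠ i in l, u i α = u' i α) (hv : ∀ α, ∀ᶠ i in l, v i α = v' i α) :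
    Tendsto (fun i => gsD e (u i) (v i) - gsD e (u' i) (v' i)) l (𝓝 0) := by
  refine Metric.tendsto_nhds.2 fun ε hε => ?_
  obtain ⟨N, hN⟩ := exists_pow_lt_of_lt_one hε (by norm_num : (1 / 2 : ℝ) < 1)
  have hagree : ∀ᶠ i in l,
      ∀ n ∈ Finset.range N, u i (e n) = u' i (e n) ∧ v i (e n) = v' i (e n) :=
    (Finset.range N).eventually_all.2 fun n _ => (hu (e n)).and (hv (e n))
  filter_upwards [hagree] with i hi
  rw [Real.dist_0_eq_abs]
  exact (abs_gsD_sub_gsD_le e fun n hn => hi n (Finset.mem_range.2 hn)).trans_lt hN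

end Metric

section Shift

variable {X Γ : Type*} {φ : Γ → Γ}

lemma gshift_iterate (t : ℕ) (x : Γ → X) : (gshift φ)^[t] x = x ∘ φ^[t] := by
  induction t generalizing x with
  | zero => rfl
  | succ t ih => rw [iterate_succ_apply', ih, iterate_succ]; rfl

lemma injective_iterate_apply_of_periodicPts_eq_empty (hφ : periodicPts φ = ∅) (a : Γ) :
    Injective fun t => φ^[t] a := by
  refine Injective.of_lt_imp_ne fun s t hst heq => ?_
  have hper : φ^[s] a ∈ periodicPts φ := by
    refine mk_mem_periodicPts (Nat.sub_pos_of_lt hst) ?_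
    rw [IsPeriodicPt, IsFixedPt, ← iterate_add_apply, Nat.sub_add_cancel hst.le, heq]
  simp [hφ] at hper

lemma eventually_iterate_apply_notMem (hφ : periodicPts φ = ∅) {F : Set Γ} (hF : F.Finite)
    (a : Γ) : ∀ᶠ t in atTop, φ^[t] a ∉ F := by
  rw [← Nat.cofinite_eq_atTop]
  exact (injective_iterate_apply_of_periodicPts_eq_empty hφ a).tendsto_cofinite.eventually
    hF.eventually_cofinite_notMem

lemma eventually_gshift_iterate_apply_eq (hφ : periodicPts φ = ∅) {F : Set Γ} (hF : F.Finite)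
    {x z : Γ → X} (hxz : ∀ α ∉ F, x α = z α) (α : Γ) :
    ∀ᶠ t in atTop, (gshift φ)^[t] x α = (gshift φ)^[t] z α := by
  filter_upwards [eventually_iterate_apply_notMem hφ hF α] with t ht
  simp only [gshift_iterate, comp_apply, hxz _ ht]

end Shift

theorem stmt5_general {X Γ : Type*} (e : ℕ ≃ Γ) (φ : Γ → Γ)
    (hφ : ¬ ∃ a : Γ, ∃ n : ℕ, 1 ≤ n ∧ φ^[n] a = a)
    (x y z w : Γ → X)
    (hxy : scrambledPair (gsD e) (gshift φ) x y)
    (F : Set Γ) (hF : F.Finite)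
    (hxz : ∀ α ∉ F, x α = z α) (hyw : ∀ α ∉ F, y α = w α) :
    scrambledPair (gsD e) (gshift φ) z w ∧
      limsup (fun t : ℕ => gsD e ((gshift φ)^[t] x) ((gshift φ)^[t] y)) atTop =
        limsup (fun t : ℕ => gsD e ((gshift φ)^[t] z) ((gshift φ)^[t] w)) atTop := by
  have hper : periodicPts φ = ∅ := Set.eq_empty_of_forall_notMem fun a ha =>
    let ⟨n, hn, hna⟩ := mem_periodicPts.1 ha
    hφ ⟨a, n, hn, hna⟩
  have hdiff := tendsto_gsD_sub_gsD e (eventually_gshift_iterate_apply_eq hper hF hxz)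
    (eventually_gshift_iterate_apply_eq hper hF hyw)
  have hle : IsBoundedUnder (· ≤ ·) atTop fun t : ℕ =>
      gsD e ((gshift φ)^[t] x) ((gshift φ)^[t] y) :=
    isBoundedUnder_of ⟨1, fun _ => gsD_le_one e _ _⟩
  have hge : IsBoundedUnder (· ≥ ·) atTop fun t : ℕ =>
      gsD e ((gshift φ)^[t] x) ((gshift φ)^[t] y) :=
    isBoundedUnder_of ⟨0, fun _ => gsD_nonneg e _ _⟩
  have hlimsup := limsup_eq_of_tendsto_sub hle hge hdiff
  have hliminf := liminf_eq_of_tendsto_sub hle hge hdiff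
  exact ⟨⟨hliminf.trans hxy.1, hlimsup ▸ hxy.2⟩, hlimsup.symm⟩

/-- Suppose `φ : Γ → Γ` has no periodic point. If `(x, y)` is a scrambled
pair of `(X^Γ, σ_φ)` and `z, w ∈ X^Γ` agree with `x, y` respectively outside a finite
set `F ⊆ Γ`, then `(z, w)` is a scrambled pair and
`limsup D(σ_φ^t x, σ_φ^t y) = limsup D(σ_φ^t z, σ_φ^t w)`. -/
theorem stmt5 {X Γ : Type*} [TopologicalSpace X] [DiscreteTopology X] [Finite X]
    [Nontrivial X] [Countable Γ] [Infinite Γ] (e : ℕ ≃ Γ) (φ : Γ → Γ)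
    (hφ : ¬ ∃ a : Γ, ∃ n : ℕ, 1 ≤ n ∧ φ^[n] a = a)
    (x y z w : Γ → X)
    (hxy : scrambledPair (gsD e) (gshift φ) x y)
    (F : Set Γ) (hF : F.Finite)
    (hxz : ∀ α ∉ F, x α = z α) (hyw : ∀ α ∉ F, y α = w α) :
    scrambledPair (gsD e) (gshift φ) z w ∧
      limsup (fun t : ℕ => gsD e ((gshift φ)^[t] x) ((gshift φ)^[t] y)) atTop =
        limsup (fun t : ℕ => gsD e ((gshift φ)^[t] z) ((gshift φ)^[t] w)) atTop :=
  stmt5_general e φ hφ x y z w hxy F hF hxz hyw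
end

section
/- If φ : Γ → Γ has at least one non-quasi-periodic point (i.e. W(φ) ≠ ∅), then the generalized shift dynamical system (X^Γ, σ_φ) is strongly sensitive: there exists ε > 0 such that for every x ∈ X^Γ and every open neighborhood U of x there exist y ∈ U and n₀ ≥ 0 with D(σ_φ^n(x), σ_φ^n(y)) ≥ ε for all n ≥ n₀. -/
/-!
Along the orbit of a non-quasi-periodic point `a` the points `φ^[n] a` are pairwise distinct, so
a basic open neighbourhood of `x`, which constrains only finitely many coordinates, constrains
`y (φ^[n] a)` for only finitely many `n`. Changing `x` at every other coordinate gives `y` in the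
neighbourhood with `(σ_φ^[n] y) a = y (φ^[n] a) ≠ (σ_φ^[n] x) a` for all large `n`, and a
disagreement at the coordinate `a = e k` costs at least `1 / 2 ^ (k + 1)` in `D`.
-/

open Filter Topology

open Function

theorem Function.injective_iterate_of_not_quasiPeriodic {Γ : Type*} {φ : Γ → Γ} {a : Γ}
    (ha : ¬ ∃ n m : ℕ, 1 ≤ m ∧ m < n ∧ φ^[n] a = φ^[m] a) :
    Injective (fun n : ℕ => φ^[n] a) := by
  refine Injective.of_lt_imp_ne fun m n hmn heq => ha ⟨n + 1, m + 1, by omega, by omega, ?_⟩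
  simp only [iterate_succ_apply', heq]

theorem gshift_iterate_apply {X Γ : Type*} (φ : Γ → Γ) (n : ℕ) (x : Γ → X) (b : Γ) :
    (gshift φ)^[n] x b = x (φ^[n] b) := by
  induction n generalizing x with
  | zero => rfl
  | succ n ih => rw [iterate_succ_apply, ih, iterate_succ_apply']; rfl

theorem one_div_two_pow_le_gsD {X Γ : Type*} (e : ℕ ≃ Γ) {x y : Γ → X} {k : ℕ}
    (h : x (e k) ≠ y (e k)) : 1 / 2 ^ (k + 1) ≤ gsD e x y := by
  classical
  have hsum : Summable fun n : ℕ => (if x (e n) = y (e n) then (0 : ℝ) else 1) / 2 ^ (n + 1) := by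
    refine summable_geometric_two.of_nonneg_of_le (fun n => by positivity) fun n => ?_
    calc (if x (e n) = y (e n) then (0 : ℝ) else 1) / 2 ^ (n + 1)
        ≤ 1 / 2 ^ (n + 1) := by gcongr; split_ifs <;> norm_num
      _ ≤ (1 / 2) ^ n := by rw [one_div_pow]; gcongr <;> norm_num
  have hk := hsum.le_tsum k fun n _ => by positivity
  rw [if_neg h] at hk
  exact hk

theorem exists_mem_eventually_ne_of_isOpen {ι X : Type*} [TopologicalSpace X] [Nontrivial X]
    {U : Set (ι → X)} (hU : IsOpen U) {x : ι → X} (hx : x ∈ U) {g : ℕ → ι} (hg : Injective g) :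
    ∃ y ∈ U, ∀ᶠ n in atTop, y (g n) ≠ x (g n) := by
  classical
  obtain ⟨I, u, hu, hIU⟩ := isOpen_pi_iff.mp hU x hx
  choose c hc using fun v : X => exists_ne v
  refine ⟨fun i => if i ∈ I then x i else c (x i), hIU fun i hi => ?_, ?_⟩
  · simpa only [if_pos (Finset.mem_coe.mp hi)] using (hu i hi).2
  · have hout : ∀ᶠ n in atTop, g n ∉ I := by
      rw [← Nat.cofinite_eq_atTop]
      exact hg.tendsto_cofinite I.finite_toSet.compl_mem_cofinite
    filter_upwards [hout] with n hn
    simpa [hn] using hc _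

theorem stmt10_general {X Γ : Type*} [TopologicalSpace X]
    [Nontrivial X] (e : ℕ ≃ Γ) (φ : Γ → Γ)
    (hφ : ∃ a : Γ, ¬ ∃ n m : ℕ, 1 ≤ m ∧ m < n ∧ φ^[n] a = φ^[m] a) :
    ∃ ε > (0 : ℝ), ∀ x : Γ → X, ∀ U : Set (Γ → X), IsOpen U → x ∈ U →
      ∃ y ∈ U, ∃ n₀ : ℕ, ∀ n ≥ n₀,
        ε ≤ gsD e ((gshift φ)^[n] x) ((gshift φ)^[n] y) := by
  obtain ⟨a, ha⟩ := hφ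
  refine ⟨1 / 2 ^ (e.symm a + 1), by positivity, fun x U hU hx => ?_⟩
  obtain ⟨y, hyU, hy⟩ := exists_mem_eventually_ne_of_isOpen hU hx
    (injective_iterate_of_not_quasiPeriodic ha)
  obtain ⟨n₀, hn₀⟩ := eventually_atTop.mp hy
  refine ⟨y, hyU, n₀, fun n hn => one_div_two_pow_le_gsD e ?_⟩
  simpa [gshift_iterate_apply] using (hn₀ n hn).symm

/-- If `φ : Γ → Γ` has a non-quasi-periodic point, then `(X^Γ, σ_φ)` is
strongly sensitive: there exists `ε > 0` such that for every `x ∈ X^Γ` and every open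
neighborhood `U` of `x` there exist `y ∈ U` and `n₀ ≥ 0` with
`D(σ_φ^n x, σ_φ^n y) ≥ ε` for all `n ≥ n₀`. -/
theorem stmt10 {X Γ : Type*} [TopologicalSpace X] [DiscreteTopology X] [Finite X]
    [Nontrivial X] [Countable Γ] [Infinite Γ] (e : ℕ ≃ Γ) (φ : Γ → Γ)
    (hφ : ∃ a : Γ, ¬ ∃ n m : ℕ, 1 ≤ m ∧ m < n ∧ φ^[n] a = φ^[m] a) :
    ∃ ε > (0 : ℝ), ∀ x : Γ → X, ∀ U : Set (Γ → X), IsOpen U → x ∈ U →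
      ∃ y ∈ U, ∃ n₀ : ℕ, ∀ n ≥ n₀,
        ε ≤ gsD e ((gshift φ)^[n] x) ((gshift φ)^[n] y) :=
  stmt10_general e φ hφ
end
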